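/- Let w > 0, R > 0, d₂ > 0, k > 0, a > 0 and angles θ_i, θ_r with sin θ_i > 0 and sin θ_r > 0. Define the complex numbers b_x = sin² θ_i / w² − i (k/2)(sin² θ_i / R + sin² θ_r / d₂) and b_y = 1/w² − i (k/2)(1/R + 1/d₂), the real numbers Λ₁ = 2 d₂/(k w²), Λ₂ = d₂/R, W_x = (w sin θ_r / sin θ_i) · √((Λ₁ sin² θ_i / sin² θ_r)² + (Λ₂ sin² θ_i / sin² θ_r + 1)²), W_y = w · √(Λ₁² + (Λ₂ + 1)²), λ = 2π/k, and C₃ = 2π sin θ_i sin θ_r / (λ² w² d₂² |b_x| |b_y|). Then C₃ · ∫_{-a√π/2}^{a√π/2} ∫_{-a√π/2}^{a√π/2} exp( − k² sin² θ_r · Re(b_x) · x² / (2 d₂² |b_x|²) − k² · Re(b_y) · y² / (2 d₂² |b_y|²) ) dx dy = erf(√(π/2) · a / W_x) · erf(√(π/2) · a / W_y). -/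

import Mathlib

open Real MeasureTheory

/-- The error function `erf x = (2/√π) ∫₀ˣ e^{-t²} dt`. -/
noncomputable def erf (x : ℝ) : ℝ := (2 / Real.sqrt π) * ∫ t in (0:ℝ)..x, Real.exp (-t^2)

lemma gauss_int (α L : ℝ) (hα : 0 < α) :
    ∫ x in (-L)..L, Real.exp (-(α * x^2))
      = Real.sqrt π / Real.sqrt α * erf (Real.sqrt α * L) := by
  have hc : 0 < Real.sqrt α := Real.sqrt_pos.mpr hα
  have h1 : ∀ x : ℝ, Real.exp (-(α * x^2))
      = (fun t => Real.exp (-(t^2))) (Real.sqrt α * x) := by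
    intro x; simp only [mul_pow, Real.sq_sqrt hα.le]
  simp_rw [h1]
  rw [intervalIntegral.integral_comp_mul_left (fun t => Real.exp (-(t^2))) hc.ne']
  have hint : ∀ a b : ℝ, IntervalIntegrable (fun t => Real.exp (-(t^2))) volume a b := by
    intro a b
    exact (Real.continuous_exp.comp (continuous_neg.comp (continuous_pow 2))).intervalIntegrable a b
  set M := Real.sqrt α * L with hM
  have heven : ∫ t in (-(M))..M, Real.exp (-(t^2))
      = 2 * ∫ t in (0:ℝ)..M, Real.exp (-(t^2)) := by
    rw [← intervalIntegral.integral_add_adjacent_intervals (hint (-M) 0) (hint 0 M)]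
    have h2 : ∫ t in (-M)..(0:ℝ), Real.exp (-(t^2)) = ∫ t in (0:ℝ)..M, Real.exp (-(t^2)) := by
      rw [show (0:ℝ) = -(0:ℝ) by ring,
        ← intervalIntegral.integral_comp_neg (fun t => Real.exp (-(t^2)))]
      simp [neg_sq]
    rw [h2]; ring
  rw [show Real.sqrt α * -L = -(M) by rw [hM]; ring, heven]
  rw [erf]
  have hpi : Real.sqrt π > 0 := Real.sqrt_pos.mpr Real.pi_pos
  simp only [smul_eq_mul]
  field_simp

/-- Lemma 3 (saturation power scaling regime): the normalized power of the reflected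
Gaussian beam collected by a square lens of side `a√π` equals the product of error
functions with the equivalent received beamwidths `W_x`, `W_y`. -/
theorem saturation_power_scaling (w R d₂ k a θi θr lam : ℝ) (bx by' : ℂ)
    (Λ₁ Λ₂ Wx Wy C₃ : ℝ)
    (hw : 0 < w) (hR : 0 < R) (hd₂ : 0 < d₂) (hk : 0 < k) (ha : 0 < a)
    (hθi : 0 < Real.sin θi) (hθr : 0 < Real.sin θr)
    (hbx : bx = Complex.ofReal (Real.sin θi ^ 2 / w ^ 2)
      - Complex.I * Complex.ofReal (k / 2 * (Real.sin θi ^ 2 / R + Real.sin θr ^ 2 / d₂)))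
    (hby : by' = Complex.ofReal (1 / w ^ 2) - Complex.I * Complex.ofReal (k / 2 * (1 / R + 1 / d₂)))
    (hΛ₁ : Λ₁ = 2 * d₂ / (k * w ^ 2)) (hΛ₂ : Λ₂ = d₂ / R)
    (hWx : Wx = w * Real.sin θr / Real.sin θi *
      Real.sqrt ((Λ₁ * Real.sin θi ^ 2 / Real.sin θr ^ 2) ^ 2
        + (Λ₂ * Real.sin θi ^ 2 / Real.sin θr ^ 2 + 1) ^ 2))
    (hWy : Wy = w * Real.sqrt (Λ₁ ^ 2 + (Λ₂ + 1) ^ 2))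
    (hlam : lam = 2 * π / k)
    (hC₃ : C₃ = 2 * π * Real.sin θi * Real.sin θr
      / (lam ^ 2 * w ^ 2 * d₂ ^ 2 * ‖bx‖ * ‖by'‖)) :
    C₃ * ∫ x in (-(a * Real.sqrt π / 2))..(a * Real.sqrt π / 2),
        ∫ y in (-(a * Real.sqrt π / 2))..(a * Real.sqrt π / 2),
          Real.exp (-(k ^ 2 * Real.sin θr ^ 2 * bx.re * x ^ 2
              / (2 * d₂ ^ 2 * ‖bx‖ ^ 2))
            - k ^ 2 * by'.re * y ^ 2 / (2 * d₂ ^ 2 * ‖by'‖ ^ 2)) =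
      erf (Real.sqrt (π / 2) * a / Wx) * erf (Real.sqrt (π / 2) * a / Wy) := by
  have hre_x : bx.re = Real.sin θi ^ 2 / w ^ 2 := by
    rw [hbx]
    simp only [Complex.sub_re, Complex.ofReal_re, Complex.mul_re, Complex.I_re,
      Complex.I_im, Complex.ofReal_im]
    ring
  have him_x : bx.im = -(k / 2 * (Real.sin θi ^ 2 / R + Real.sin θr ^ 2 / d₂)) := by
    rw [hbx]
    simp only [Complex.sub_im, Complex.ofReal_im, Complex.mul_im, Complex.I_re,
      Complex.I_im, Complex.ofReal_re]
    ring
  have hre_y : by'.re = 1 / w ^ 2 := by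
    rw [hby]
    simp only [Complex.sub_re, Complex.ofReal_re, Complex.mul_re, Complex.I_re,
      Complex.I_im, Complex.ofReal_im]
    ring
  have him_y : by'.im = -(k / 2 * (1 / R + 1 / d₂)) := by
    rw [hby]
    simp only [Complex.sub_im, Complex.ofReal_im, Complex.mul_im, Complex.I_re,
      Complex.I_im, Complex.ofReal_re]
    ring
  have habx2 : ‖bx‖ ^ 2
      = (Real.sin θi ^ 2 / w ^ 2) ^ 2
        + (k / 2 * (Real.sin θi ^ 2 / R + Real.sin θr ^ 2 / d₂)) ^ 2 := by
    rw [Complex.sq_norm, Complex.normSq_apply, hre_x, him_x]; ring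
  have haby2 : ‖by'‖ ^ 2
      = (1 / w ^ 2) ^ 2 + (k / 2 * (1 / R + 1 / d₂)) ^ 2 := by
    rw [Complex.sq_norm, Complex.normSq_apply, hre_y, him_y]; ring
  have habx_pos : 0 < ‖bx‖ := by
    have h1 : bx.re ≠ 0 := by rw [hre_x]; positivity
    exact norm_pos_iff.mpr (fun h => h1 (by rw [h]; simp))
  have haby_pos : 0 < ‖by'‖ := by
    have h1 : by'.re ≠ 0 := by rw [hre_y]; positivity
    exact norm_pos_iff.mpr (fun h => h1 (by rw [h]; simp))
  set αx : ℝ := k ^ 2 * Real.sin θr ^ 2 * bx.re / (2 * d₂ ^ 2 * ‖bx‖ ^ 2) with hαx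
  set αy : ℝ := k ^ 2 * by'.re / (2 * d₂ ^ 2 * ‖by'‖ ^ 2) with hαy
  have hαx_pos : 0 < αx := by rw [hαx, hre_x]; positivity
  have hαy_pos : 0 < αy := by rw [hαy, hre_y]; positivity
  -- closed form of Wx, Wy
  have hWx_nonneg : 0 ≤ Wx := by rw [hWx]; positivity
  have hWy_nonneg : 0 ≤ Wy := by rw [hWy]; positivity
  have hWxval : Wx = 2 * d₂ * w * ‖bx‖ / (k * Real.sin θi * Real.sin θr) := by
    have h2 : Wx ^ 2
        = (2 * d₂ * w * ‖bx‖ / (k * Real.sin θi * Real.sin θr)) ^ 2 := by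
      have hrx : (2 * d₂ * w * ‖bx‖ / (k * Real.sin θi * Real.sin θr)) ^ 2
          = (2 * d₂ * w) ^ 2 * ((Real.sin θi ^ 2 / w ^ 2) ^ 2
              + (k / 2 * (Real.sin θi ^ 2 / R + Real.sin θr ^ 2 / d₂)) ^ 2)
            / (k * Real.sin θi * Real.sin θr) ^ 2 := by
        rw [div_pow, mul_pow, habx2]
      rw [hWx, hΛ₁, hΛ₂, mul_pow, Real.sq_sqrt (by positivity), hrx]
      field_simp
    rw [← Real.sqrt_sq hWx_nonneg, h2, Real.sqrt_sq (by positivity)]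
  have hWyval : Wy = 2 * d₂ * w * ‖by'‖ / k := by
    have h2 : Wy ^ 2 = (2 * d₂ * w * ‖by'‖ / k) ^ 2 := by
      have hry : (2 * d₂ * w * ‖by'‖ / k) ^ 2
          = (2 * d₂ * w) ^ 2 * ((1 / w ^ 2) ^ 2 + (k / 2 * (1 / R + 1 / d₂)) ^ 2) / k ^ 2 := by
        rw [div_pow, mul_pow, haby2]
      rw [hWy, hΛ₁, hΛ₂, mul_pow, Real.sq_sqrt (by positivity), hry]
      field_simp
    rw [← Real.sqrt_sq hWy_nonneg, h2, Real.sqrt_sq (by positivity)]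
  have hWx_pos : 0 < Wx := by rw [hWxval]; positivity
  have hWy_pos : 0 < Wy := by rw [hWyval]; positivity
  -- αx = 2 / Wx², αy = 2 / Wy²
  have hαxW : αx = 2 / Wx ^ 2 := by
    rw [hαx, hre_x, hWxval]
    field_simp
  have hαyW : αy = 2 / Wy ^ 2 := by
    rw [hαy, hre_y, hWyval]
    field_simp
  have h2pos : (0:ℝ) < Real.sqrt 2 := by positivity
  have h22 : Real.sqrt 2 * Real.sqrt 2 = 2 := Real.mul_self_sqrt (by norm_num)
  have hpp : Real.sqrt π * Real.sqrt π = π := Real.mul_self_sqrt Real.pi_pos.le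
  have h22' : Real.sqrt 2 ^ 2 = 2 := Real.sq_sqrt (by norm_num)
  have hsax : Real.sqrt αx = Real.sqrt 2 / Wx := by
    rw [hαxW, show (2:ℝ) / Wx ^ 2 = 2 / Wx ^ 2 from rfl,
      Real.sqrt_div (by norm_num) , Real.sqrt_sq hWx_pos.le]
  have hsay : Real.sqrt αy = Real.sqrt 2 / Wy := by
    rw [hαyW, Real.sqrt_div (by norm_num), Real.sqrt_sq hWy_pos.le]
  -- split the double integral
  have hsplit : ∀ x y : ℝ,
      Real.exp (-(k ^ 2 * Real.sin θr ^ 2 * bx.re * x ^ 2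
          / (2 * d₂ ^ 2 * ‖bx‖ ^ 2))
        - k ^ 2 * by'.re * y ^ 2 / (2 * d₂ ^ 2 * ‖by'‖ ^ 2))
      = Real.exp (-(αx * x ^ 2)) * Real.exp (-(αy * y ^ 2)) := by
    intro x y
    rw [← Real.exp_add]
    congr 1
    rw [hαx, hαy]
    ring
  simp_rw [hsplit, intervalIntegral.integral_const_mul, intervalIntegral.integral_mul_const]
  rw [gauss_int αx (a * Real.sqrt π / 2) hαx_pos, gauss_int αy (a * Real.sqrt π / 2) hαy_pos]
  rw [hsax, hsay]
  -- erf arguments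
  have harg : ∀ W : ℝ, 0 < W →
      Real.sqrt 2 / W * (a * Real.sqrt π / 2) = Real.sqrt (π / 2) * a / W := by
    intro W hW
    rw [Real.sqrt_div Real.pi_pos.le]
    field_simp
    linear_combination h22'
  rw [harg Wx hWx_pos, harg Wy hWy_pos]
  have hfac2 : C₃ * π * Wx * Wy = 2 := by
    rw [hC₃, hlam, hWxval, hWyval]
    field_simp
  have hC : C₃ * (Real.sqrt π / (Real.sqrt 2 / Wx)) * (Real.sqrt π / (Real.sqrt 2 / Wy)) = 1 := by
    rw [div_div_eq_mul_div, div_div_eq_mul_div]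
    field_simp
    linear_combination hfac2 + C₃ * Wx * Wy * hpp - h22'
  linear_combination
    erf (Real.sqrt (π / 2) * a / Wx) * erf (Real.sqrt (π / 2) * a / Wy) * hC
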